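/- arXiv:1909.10226 — 4 statements merged into one kernel-verified Lean document; each statement's English description precedes it below -/
import Mathlib

section
/- Let H be a complex Hilbert space and let x, y be elements of the closed unit ball of a C*-algebra A with ‖x + y‖ = d. Then for every λ ∈ [0, 1/2], ‖λ·x + (1-λ)·y‖ ≤ 1 - (4 - d²)·λ/4. -/
theorem stmt_1 {A : Type*} [CStarAlgebra A] (x y : A) (hx : ‖x‖ ≤ 1) (hy : ‖y‖ ≤ 1)
    (d : ℝ) (hd : d = ‖x + y‖) (lam : ℝ) (h0 : 0 ≤ lam) (h1 : lam ≤ 1/2) :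
    ‖lam • x + (1 - lam) • y‖ ≤ 1 - (4 - d^2) * lam / 4 := by
  have hd0 : 0 ≤ d := hd ▸ norm_nonneg _
  have hd2 : d ≤ 2 := by
    rw [hd]
    calc ‖x + y‖ ≤ ‖x‖ + ‖y‖ := norm_add_le _ _
      _ ≤ 2 := by linarith
  have key : lam • x + (1 - lam) • y = lam • (x + y) + (1 - 2 * lam) • y := by
    module
  rw [key]
  have h2 : ‖lam • (x + y) + (1 - 2 * lam) • y‖ ≤ ‖lam • (x + y)‖ + ‖(1 - 2 * lam) • y‖ :=
    norm_add_le _ _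
  rw [norm_smul, norm_smul] at h2
  simp only [Real.norm_eq_abs] at h2
  rw [abs_of_nonneg h0, abs_of_nonneg (by linarith : (0:ℝ) ≤ 1 - 2 * lam)] at h2
  have hny : (1 - 2 * lam) * ‖y‖ ≤ 1 - 2 * lam := by
    nlinarith [norm_nonneg y]
  rw [← hd] at h2
  nlinarith [mul_nonneg h0 (by linarith : (0:ℝ) ≤ 2 - d), mul_nonneg (mul_nonneg h0 (by linarith : (0:ℝ) ≤ 2 - d)) (by linarith : (0:ℝ) ≤ 2 - d)]
end

section
/- Let A be an n×n Hermitian complex matrix with eigenvalues arranged in decreasing order λ₁(A) ≥ ... ≥ λₙ(A), and likewise for a Hermitian matrix B. Then for every k, |λₖ(A) - λₖ(B)| ≤ ‖A - B‖, where ‖·‖ is the operator norm. -/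
/-!
Courant–Fischer style argument. In `ℂⁿ`, the span of eigenvectors of `A` for `λ₁(A), …, λₖ(A)`
and the span of eigenvectors of `B` for `λₖ(B), …, λₙ(B)` have dimensions `k` and `n - k + 1`,
so they share a unit vector `x`. On the first span `re ⟪A x, x⟫ ≥ λₖ(A)`, on the second
`re ⟪B x, x⟫ ≤ λₖ(B)`, hence `λₖ(A) - λₖ(B) ≤ re ⟪(A - B) x, x⟫ ≤ ‖A - B‖`.
Exchanging `A` and `B` gives the other half of the absolute value.
-/

open Module

namespace OrthonormalBasis

variable {𝕜 E ι : Type*} [RCLike 𝕜] [NormedAddCommGroup E] [InnerProductSpace 𝕜 E] [Fintype ι]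

lemma finrank_span_image (b : OrthonormalBasis ι 𝕜 E) (s : Finset ι) :
    finrank 𝕜 (Submodule.span 𝕜 (b '' s)) = s.card := by
  rw [Set.image_eq_range]
  exact (finrank_span_eq_card (b.orthonormal.linearIndependent.comp _ Subtype.val_injective)).trans
    (Fintype.card_coe s)

lemma repr_eq_zero_of_mem_span_image (b : OrthonormalBasis ι 𝕜 E) {s : Set ι} {x : E}
    (hx : x ∈ Submodule.span 𝕜 (b '' s)) {i : ι} (hi : i ∉ s) : b.repr x i = 0 := by
  rw [← b.coe_toBasis, Basis.mem_span_image] at hx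
  rw [← b.coe_toBasis_repr_apply]
  exact Finsupp.notMem_support_iff.1 fun h => hi (hx h)

variable {T : E →L[𝕜] E} {b : OrthonormalBasis ι 𝕜 E} {μ : ι → ℝ}

lemma repr_apply_of_apply_eq_smul (hb : ∀ i, T (b i) = (μ i : 𝕜) • b i) (x : E) (i : ι) :
    b.repr (T x) i = μ i * b.repr x i := by
  classical
  conv_lhs => rw [← b.sum_repr x]
  simp [hb, b.repr_self, Pi.single_apply, RCLike.real_smul_eq_coe_mul, mul_comm]

lemma reApplyInnerSelf_eq_sum (hb : ∀ i, T (b i) = (μ i : 𝕜) • b i) (x : E) :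
    T.reApplyInnerSelf x = ∑ i, μ i * ‖b.repr x i‖ ^ 2 := by
  rw [T.reApplyInnerSelf_apply, ← b.repr.inner_map_map, PiLp.inner_apply, map_sum]
  refine Finset.sum_congr rfl fun i _ => ?_
  rw [repr_apply_of_apply_eq_smul hb, RCLike.inner_apply, map_mul (starRingEnd 𝕜),
    RCLike.conj_ofReal, mul_left_comm, RCLike.mul_conj]
  norm_cast

lemma mul_norm_sq_le_reApplyInnerSelf (hb : ∀ i, T (b i) = (μ i : 𝕜) • b i) {s : Set ι} {c : ℝ}
    (hc : ∀ i ∈ s, c ≤ μ i) {x : E} (hx : x ∈ Submodule.span 𝕜 (b '' s)) :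
    c * ‖x‖ ^ 2 ≤ T.reApplyInnerSelf x := by
  rw [reApplyInnerSelf_eq_sum hb, ← b.repr.norm_map, EuclideanSpace.norm_sq_eq, Finset.mul_sum]
  refine Finset.sum_le_sum fun i _ => ?_
  by_cases hi : i ∈ s
  · exact mul_le_mul_of_nonneg_right (hc i hi) (sq_nonneg _)
  · simp [b.repr_eq_zero_of_mem_span_image hx hi]

lemma reApplyInnerSelf_le_mul_norm_sq (hb : ∀ i, T (b i) = (μ i : 𝕜) • b i) {s : Set ι} {c : ℝ}
    (hc : ∀ i ∈ s, μ i ≤ c) {x : E} (hx : x ∈ Submodule.span 𝕜 (b '' s)) :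
    T.reApplyInnerSelf x ≤ c * ‖x‖ ^ 2 := by
  rw [reApplyInnerSelf_eq_sum hb, ← b.repr.norm_map, EuclideanSpace.norm_sq_eq, Finset.mul_sum]
  refine Finset.sum_le_sum fun i _ => ?_
  by_cases hi : i ∈ s
  · exact mul_le_mul_of_nonneg_right (hc i hi) (sq_nonneg _)
  · simp [b.repr_eq_zero_of_mem_span_image hx hi]

end OrthonormalBasis

lemma Submodule.exists_mem_inf_ne_zero_of_finrank_lt {K V : Type*} [DivisionRing K]
    [AddCommGroup V] [Module K V] [FiniteDimensional K V] {S T : Submodule K V}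
    (h : finrank K V < finrank K S + finrank K T) : ∃ x ∈ S ⊓ T, x ≠ 0 := by
  refine Submodule.exists_mem_ne_zero_of_ne_bot fun hbot => ?_
  have hsum := Submodule.finrank_sup_add_finrank_inf_eq S T
  have hsup := Submodule.finrank_le (S ⊔ T)
  rw [hbot, finrank_bot] at hsum
  omega

namespace ContinuousLinearMap

variable {𝕜 E : Type*} [RCLike 𝕜] [NormedAddCommGroup E] [InnerProductSpace 𝕜 E]

lemma reApplyInnerSelf_le_opNorm_mul (T : E →L[𝕜] E) (x : E) :
    T.reApplyInnerSelf x ≤ ‖T‖ * ‖x‖ ^ 2 :=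
  calc T.reApplyInnerSelf x ≤ ‖T x‖ * ‖x‖ := re_inner_le_norm _ _
    _ ≤ ‖T‖ * ‖x‖ * ‖x‖ := by gcongr; exact T.le_opNorm x
    _ = ‖T‖ * ‖x‖ ^ 2 := by ring

lemma reApplyInnerSelf_sub (T S : E →L[𝕜] E) (x : E) :
    (T - S).reApplyInnerSelf x = T.reApplyInnerSelf x - S.reApplyInnerSelf x := by
  simp [reApplyInnerSelf_apply, inner_sub_left]

end ContinuousLinearMap

open ContinuousLinearMap in
theorem sub_le_opNorm_sub_of_finrank_lt {𝕜 E ι κ : Type*} [RCLike 𝕜] [NormedAddCommGroup E]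
    [InnerProductSpace 𝕜 E] [FiniteDimensional 𝕜 E] [Fintype ι] [Fintype κ] {T S : E →L[𝕜] E}
    {b : OrthonormalBasis ι 𝕜 E} {b' : OrthonormalBasis κ 𝕜 E} {μ : ι → ℝ} {ν : κ → ℝ}
    (hb : ∀ i, T (b i) = (μ i : 𝕜) • b i) (hb' : ∀ j, S (b' j) = (ν j : 𝕜) • b' j)
    {s : Finset ι} {t : Finset κ} (hst : finrank 𝕜 E < s.card + t.card) {c d : ℝ}
    (hc : ∀ i ∈ s, c ≤ μ i) (hd : ∀ j ∈ t, ν j ≤ d) : c - d ≤ ‖T - S‖ := by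
  obtain ⟨x, ⟨hxs, hxt⟩, hx⟩ := Submodule.exists_mem_inf_ne_zero_of_finrank_lt
    (S := Submodule.span 𝕜 (b '' s)) (T := Submodule.span 𝕜 (b' '' t))
    (by rwa [b.finrank_span_image, b'.finrank_span_image])
  refine le_of_mul_le_mul_right ?_ (pow_pos (norm_pos_iff.2 hx) 2)
  calc (c - d) * ‖x‖ ^ 2 ≤ T.reApplyInnerSelf x - S.reApplyInnerSelf x := by
        have hT := b.mul_norm_sq_le_reApplyInnerSelf hb hc hxs
        have hS := b'.reApplyInnerSelf_le_mul_norm_sq hb' hd hxt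
        linarith
    _ = (T - S).reApplyInnerSelf x := (reApplyInnerSelf_sub T S x).symm
    _ ≤ ‖T - S‖ * ‖x‖ ^ 2 := (T - S).reApplyInnerSelf_le_opNorm_mul x

theorem sub_le_opNorm_sub_of_antitone {𝕜 E : Type*} [RCLike 𝕜] [NormedAddCommGroup E]
    [InnerProductSpace 𝕜 E] {n : ℕ} {T S : E →L[𝕜] E} {b b' : OrthonormalBasis (Fin n) 𝕜 E}
    {μ ν : Fin n → ℝ} (hμ : Antitone μ) (hν : Antitone ν)
    (hb : ∀ i, T (b i) = (μ i : 𝕜) • b i) (hb' : ∀ j, S (b' j) = (ν j : 𝕜) • b' j) (k : Fin n) :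
    μ k - ν k ≤ ‖T - S‖ := by
  have : FiniteDimensional 𝕜 E := b.toBasis.finiteDimensional_of_finite
  refine sub_le_opNorm_sub_of_finrank_lt hb hb' (s := Finset.Iic k) (t := Finset.Ici k) ?_
    (fun i hi => hμ (Finset.mem_Iic.1 hi)) (fun j hj => hν (Finset.mem_Ici.1 hj))
  rw [finrank_eq_card_basis b.toBasis, Fintype.card_fin, Fin.card_Iic, Fin.card_Ici]
  omega

lemma Matrix.IsHermitian.exists_orthonormalBasis_toEuclideanCLM_apply_eq_smul {𝕜 m : Type*}
    [RCLike 𝕜] [Fintype m] [DecidableEq m] {A : Matrix m m 𝕜} (hA : A.IsHermitian) {lam : m → ℝ}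
    (hlam : ∃ σ : Equiv.Perm m, ∀ i, lam i = hA.eigenvalues (σ i)) :
    ∃ b : OrthonormalBasis m 𝕜 (EuclideanSpace 𝕜 m),
      ∀ i, Matrix.toEuclideanCLM (𝕜 := 𝕜) A (b i) = (lam i : 𝕜) • b i := by
  obtain ⟨σ, hσ⟩ := hlam
  refine ⟨hA.eigenvectorBasis.reindex σ.symm, fun i => ?_⟩
  rw [OrthonormalBasis.reindex_apply, Equiv.symm_symm, hσ]
  ext1
  simp [hA.mulVec_eigenvectorBasis]

theorem stmt_3 {n : ℕ} (A B : Matrix (Fin n) (Fin n) ℂ)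
    (hA : A.IsHermitian) (hB : B.IsHermitian)
    (lamA lamB : Fin n → ℝ) (hlamA : Antitone lamA) (hlamB : Antitone lamB)
    (henumA : ∃ σ : Equiv.Perm (Fin n), ∀ i, lamA i = hA.eigenvalues (σ i))
    (henumB : ∃ σ : Equiv.Perm (Fin n), ∀ i, lamB i = hB.eigenvalues (σ i)) :
    ∀ k : Fin n, |lamA k - lamB k| ≤ ‖Matrix.toEuclideanCLM (𝕜 := ℂ) (A - B)‖ := by
  intro k
  obtain ⟨a, ha⟩ := hA.exists_orthonormalBasis_toEuclideanCLM_apply_eq_smul henumA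
  obtain ⟨b, hb⟩ := hB.exists_orthonormalBasis_toEuclideanCLM_apply_eq_smul henumB
  rw [map_sub, abs_sub_le_iff]
  refine ⟨sub_le_opNorm_sub_of_antitone hlamA hlamB ha hb k, ?_⟩
  rw [norm_sub_rev]
  exact sub_le_opNorm_sub_of_antitone hlamB hlamA hb ha k
end

section
/- Let A be an n×n Hermitian complex matrix with eigenvalues λ₁(A) ≥ ... ≥ λₙ(A), and let B be the principal (n-1)×(n-1) submatrix obtained by deleting the last row and column, with eigenvalues μ₁ ≥ ... ≥ μ_{n-1}. Then for every k with 1 ≤ k ≤ n-1, λ_{k+1}(A) ≤ μₖ ≤ λₖ(A). -/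
/-!
Courant–Fischer dimension count. Extension by zero is an isometry `J : ℂⁿ → ℂⁿ⁺¹` with
`⟪J y, A (J z)⟫ = ⟪y, B z⟫`. If `s` indexes eigenvectors of `A` and `t` eigenvectors of `B` with
`|s| + |t| > n + 1`, the span of the former meets the image under `J` of the span of the latter
in a nonzero vector, whose Rayleigh quotient lies between the extreme eigenvalues over `s` and
also between those over `t`. With 0-based indices, `s = {k, …, n}`, `t = {0, …, k}` give
`μₖ ≤ λₖ`, and `s = {0, …, k + 1}`, `t = {k, …, n - 1}` give `λₖ₊₁ ≤ μₖ`.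
-/

open scoped InnerProductSpace
open Module Submodule

section Rayleigh

variable {𝕜 E ι : Type*} [RCLike 𝕜] [NormedAddCommGroup E] [InnerProductSpace 𝕜 E]
  {v : ι → E} {T : E →ₗ[𝕜] E} {e : ι → ℝ}

theorem Orthonormal.re_inner_sum_smul_map (hv : Orthonormal 𝕜 v)
    (hT : ∀ i, T (v i) = (e i : 𝕜) • v i) (l : ι → 𝕜) (s : Finset ι) :
    RCLike.re ⟪∑ i ∈ s, l i • v i, T (∑ i ∈ s, l i • v i)⟫_𝕜 = ∑ i ∈ s, e i * ‖l i‖ ^ 2 := by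
  have hTx : T (∑ i ∈ s, l i • v i) = ∑ i ∈ s, (l i * e i) • v i := by
    simp only [map_sum, map_smul, hT, smul_smul]
  rw [hTx, hv.inner_sum, map_sum]
  refine Finset.sum_congr rfl fun i _ => ?_
  rw [← mul_assoc, RCLike.conj_mul]
  norm_cast
  exact mul_comm _ _

theorem Orthonormal.norm_sum_smul_sq (hv : Orthonormal 𝕜 v) (l : ι → 𝕜) (s : Finset ι) :
    ‖∑ i ∈ s, l i • v i‖ ^ 2 = ∑ i ∈ s, ‖l i‖ ^ 2 := by
  rw [@norm_sq_eq_re_inner 𝕜]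
  simpa using hv.re_inner_sum_smul_map (T := LinearMap.id) (e := 1) (by simp) l s

variable {s : Finset ι} {c : ℝ} {x : E}

theorem Orthonormal.mul_norm_sq_le_re_inner_map_self (hv : Orthonormal 𝕜 v)
    (hT : ∀ i, T (v i) = (e i : 𝕜) • v i) (hc : ∀ i ∈ s, c ≤ e i)
    (hx : x ∈ span 𝕜 (v '' s)) : c * ‖x‖ ^ 2 ≤ RCLike.re ⟪x, T x⟫_𝕜 := by
  obtain ⟨l, rfl⟩ := (mem_span_image_finset_iff_exists_fun' 𝕜).mp hx
  rw [hv.norm_sum_smul_sq, hv.re_inner_sum_smul_map hT, Finset.mul_sum]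
  gcongr with i hi
  exact hc i hi

theorem Orthonormal.re_inner_map_self_le_mul_norm_sq (hv : Orthonormal 𝕜 v)
    (hT : ∀ i, T (v i) = (e i : 𝕜) • v i) (hc : ∀ i ∈ s, e i ≤ c)
    (hx : x ∈ span 𝕜 (v '' s)) : RCLike.re ⟪x, T x⟫_𝕜 ≤ c * ‖x‖ ^ 2 := by
  obtain ⟨l, rfl⟩ := (mem_span_image_finset_iff_exists_fun' 𝕜).mp hx
  rw [hv.norm_sum_smul_sq, hv.re_inner_sum_smul_map hT, Finset.mul_sum]
  gcongr with i hi
  exact hc i hi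

theorem Orthonormal.finrank_span_image_finset (hv : Orthonormal 𝕜 v) (s : Finset ι) :
    finrank 𝕜 (span 𝕜 (v '' s)) = s.card := by
  rw [Set.image_eq_range, finrank_span_eq_card]
  · simp
  · exact (hv.comp _ Subtype.val_injective).linearIndependent

end Rayleigh

theorem LinearMap.exists_mem_ne_zero_apply_mem_of_finrank_lt {K V W : Type*} [DivisionRing K]
    [AddCommGroup V] [Module K V] [FiniteDimensional K V] [AddCommGroup W] [Module K W]
    {f : W →ₗ[K] V} (hf : Function.Injective f) {p : Submodule K V} {q : Submodule K W}
    (h : finrank K V < finrank K p + finrank K q) : ∃ y ∈ q, y ≠ 0 ∧ f y ∈ p := by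
  have hq : finrank K (q.map f) = finrank K q :=
    (q.equivMapOfInjective f hf).symm.finrank_eq
  have : ¬ Disjoint p (q.map f) := fun hd =>
    (finrank_add_finrank_le_of_disjoint hd).not_gt (hq ▸ h)
  obtain ⟨x, hxp, ⟨y, hy, rfl⟩, hx0⟩ : ∃ x ∈ p, x ∈ q.map f ∧ x ≠ 0 := by
    simpa [disjoint_def] using this
  exact ⟨y, hy, fun hy0 => hx0 (by simp [hy0]), hxp⟩

section Compression

variable {𝕜 E F : Type*} [RCLike 𝕜] [NormedAddCommGroup E] [InnerProductSpace 𝕜 E]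
  [FiniteDimensional 𝕜 E] [NormedAddCommGroup F] [InnerProductSpace 𝕜 F]
  {T : E →ₗ[𝕜] E} {S : F →ₗ[𝕜] F} {J : F →ₗᵢ[𝕜] E}

section Finset

variable {ι κ : Type*} {v : ι → E} {lam : ι → ℝ} {w : κ → F} {mu : κ → ℝ}
  {s : Finset ι} {t : Finset κ}

theorem LinearIsometry.exists_ne_zero_mem_span_map_mem_span (hv : Orthonormal 𝕜 v)
    (hw : Orthonormal 𝕜 w) (hst : finrank 𝕜 E < s.card + t.card) :
    ∃ y ∈ span 𝕜 (w '' t), y ≠ 0 ∧ J y ∈ span 𝕜 (v '' s) := by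
  refine LinearMap.exists_mem_ne_zero_apply_mem_of_finrank_lt (f := J.toLinearMap) J.injective ?_
  rwa [hv.finrank_span_image_finset, hw.finrank_span_image_finset]

theorem le_of_compression_of_finrank_lt (hJ : ∀ y z, ⟪J y, T (J z)⟫_𝕜 = ⟪y, S z⟫_𝕜)
    (hv : Orthonormal 𝕜 v) (hTv : ∀ i, T (v i) = (lam i : 𝕜) • v i)
    (hw : Orthonormal 𝕜 w) (hSw : ∀ j, S (w j) = (mu j : 𝕜) • w j)
    (hst : finrank 𝕜 E < s.card + t.card) {a b : ℝ}
    (hs : ∀ i ∈ s, lam i ≤ a) (ht : ∀ j ∈ t, b ≤ mu j) : b ≤ a := by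
  obtain ⟨y, hyt, hy0, hys⟩ := J.exists_ne_zero_mem_span_map_mem_span hv hw hst
  have hT := hv.re_inner_map_self_le_mul_norm_sq hTv hs hys
  have hS := hw.mul_norm_sq_le_re_inner_map_self hSw ht hyt
  rw [hJ, J.norm_map] at hT
  exact le_of_mul_le_mul_right (hS.trans hT) (by positivity)

theorem le_of_compression_of_finrank_lt' (hJ : ∀ y z, ⟪J y, T (J z)⟫_𝕜 = ⟪y, S z⟫_𝕜)
    (hv : Orthonormal 𝕜 v) (hTv : ∀ i, T (v i) = (lam i : 𝕜) • v i)
    (hw : Orthonormal 𝕜 w) (hSw : ∀ j, S (w j) = (mu j : 𝕜) • w j)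
    (hst : finrank 𝕜 E < s.card + t.card) {a b : ℝ}
    (hs : ∀ i ∈ s, a ≤ lam i) (ht : ∀ j ∈ t, mu j ≤ b) : a ≤ b := by
  obtain ⟨y, hyt, hy0, hys⟩ := J.exists_ne_zero_mem_span_map_mem_span hv hw hst
  have hT := hv.mul_norm_sq_le_re_inner_map_self hTv hs hys
  have hS := hw.re_inner_map_self_le_mul_norm_sq hSw ht hyt
  rw [hJ, J.norm_map] at hT
  exact le_of_mul_le_mul_right (hT.trans hS) (by positivity)

end Finset

variable {N M : ℕ} {v : Fin N → E} {lam : Fin N → ℝ} {w : Fin M → F} {mu : Fin M → ℝ}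

theorem compression_eigenvalue_le_eigenvalue (hJ : ∀ y z, ⟪J y, T (J z)⟫_𝕜 = ⟪y, S z⟫_𝕜)
    (hN : finrank 𝕜 E = N) (hv : Orthonormal 𝕜 v) (hTv : ∀ i, T (v i) = (lam i : 𝕜) • v i)
    (hlam : Antitone lam) (hw : Orthonormal 𝕜 w) (hSw : ∀ j, S (w j) = (mu j : 𝕜) • w j)
    (hmu : Antitone mu) {i : Fin N} {k : Fin M} (hik : (i : ℕ) ≤ k) : mu k ≤ lam i :=
  le_of_compression_of_finrank_lt hJ hv hTv hw hSw (s := .Ici i) (t := .Iic k)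
    (by simp only [hN, Fin.card_Ici, Fin.card_Iic]; omega)
    (fun _ h => hlam (Finset.mem_Ici.mp h)) (fun _ h => hmu (Finset.mem_Iic.mp h))

theorem eigenvalue_le_compression_eigenvalue (hJ : ∀ y z, ⟪J y, T (J z)⟫_𝕜 = ⟪y, S z⟫_𝕜)
    (hN : finrank 𝕜 E = N) (hv : Orthonormal 𝕜 v) (hTv : ∀ i, T (v i) = (lam i : 𝕜) • v i)
    (hlam : Antitone lam) (hw : Orthonormal 𝕜 w) (hSw : ∀ j, S (w j) = (mu j : 𝕜) • w j)
    (hmu : Antitone mu) {i : Fin N} {k : Fin M} (hik : (k : ℕ) + N ≤ i + M) : lam i ≤ mu k :=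
  le_of_compression_of_finrank_lt' hJ hv hTv hw hSw (s := .Iic i) (t := .Ici k)
    (by simp only [hN, Fin.card_Ici, Fin.card_Iic]; omega)
    (fun _ h => hlam (Finset.mem_Iic.mp h)) (fun _ h => hmu (Finset.mem_Ici.mp h))

end Compression

namespace Matrix

variable {𝕜 m n : Type*} [RCLike 𝕜] [Fintype n] [DecidableEq n]

theorem conjTranspose_one_submatrix_mul_mul (A : Matrix n n 𝕜) (f : m → n) :
    ((1 : Matrix n n 𝕜).submatrix id f)ᴴ * A * (1 : Matrix n n 𝕜).submatrix id f =
      A.submatrix f f := by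
  rw [conjTranspose_submatrix, conjTranspose_one, ← submatrix_id_id A,
    ← submatrix_mul _ _ _ _ _ Function.bijective_id,
    ← submatrix_mul _ _ _ _ _ Function.bijective_id, Matrix.one_mul, Matrix.mul_one,
    submatrix_id_id]

variable [DecidableEq m]

theorem conjTranspose_one_submatrix_mul_self {f : m → n} (hf : Function.Injective f) :
    ((1 : Matrix n n 𝕜).submatrix id f)ᴴ * (1 : Matrix n n 𝕜).submatrix id f = 1 := by
  rw [conjTranspose_submatrix, conjTranspose_one, ← submatrix_mul _ _ _ _ _ Function.bijective_id,
    Matrix.mul_one, submatrix_one f hf]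

variable [Fintype m]

theorem inner_toEuclideanLin_conjTranspose_mul_mul (P : Matrix n m 𝕜) (A : Matrix n n 𝕜)
    (y z : EuclideanSpace 𝕜 m) :
    ⟪toEuclideanLin P y, toEuclideanLin A (toEuclideanLin P z)⟫_𝕜 =
      ⟪y, toEuclideanLin (Pᴴ * A * P) z⟫_𝕜 := by
  rw [toLpLin_mul_same, toLpLin_mul_same, LinearMap.comp_apply, LinearMap.comp_apply,
    toEuclideanLin_conjTranspose_eq_adjoint, LinearMap.adjoint_inner_right]

noncomputable def toEuclideanLinearIsometry (P : Matrix n m 𝕜) (hP : Pᴴ * P = 1) :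
    EuclideanSpace 𝕜 m →ₗᵢ[𝕜] EuclideanSpace 𝕜 n :=
  (toEuclideanLin P).isometryOfInner fun y z => by
    rw [← LinearMap.adjoint_inner_right, ← toEuclideanLin_conjTranspose_eq_adjoint,
      ← LinearMap.comp_apply, ← toLpLin_mul_same, hP, toLpLin_one, LinearMap.id_apply]

noncomputable def extendByZeroIsometry {f : m → n} (hf : Function.Injective f) :
    EuclideanSpace 𝕜 m →ₗᵢ[𝕜] EuclideanSpace 𝕜 n :=
  toEuclideanLinearIsometry _ (conjTranspose_one_submatrix_mul_self hf)

theorem inner_extendByZeroIsometry_toEuclideanLin (A : Matrix n n 𝕜) {f : m → n}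
    (hf : Function.Injective f) (y z : EuclideanSpace 𝕜 m) :
    ⟪extendByZeroIsometry hf y, toEuclideanLin A (extendByZeroIsometry hf z)⟫_𝕜 =
      ⟪y, toEuclideanLin (A.submatrix f f) z⟫_𝕜 := by
  rw [← conjTranspose_one_submatrix_mul_mul]
  exact inner_toEuclideanLin_conjTranspose_mul_mul _ A y z

theorem IsHermitian.toEuclideanLin_eigenvectorBasis {A : Matrix n n 𝕜} (hA : A.IsHermitian)
    (j : n) : toEuclideanLin A (hA.eigenvectorBasis j) =
      (hA.eigenvalues j : 𝕜) • hA.eigenvectorBasis j := by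
  rw [toLpLin_apply, hA.mulVec_eigenvectorBasis, RCLike.real_smul_eq_coe_smul (K := 𝕜)]
  rfl

end Matrix

theorem stmt_4 {n : ℕ} (A : Matrix (Fin (n+1)) (Fin (n+1)) ℂ) (hA : A.IsHermitian)
    (B : Matrix (Fin n) (Fin n) ℂ)
    (hBdef : B = A.submatrix Fin.castSucc Fin.castSucc) (hB : B.IsHermitian)
    (lamA : Fin (n+1) → ℝ) (hlamA : Antitone lamA)
    (henumA : ∃ σ : Equiv.Perm (Fin (n+1)), ∀ i, lamA i = hA.eigenvalues (σ i))
    (mu : Fin n → ℝ) (hmu : Antitone mu)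
    (henumB : ∃ σ : Equiv.Perm (Fin n), ∀ i, mu i = hB.eigenvalues (σ i)) :
    ∀ k : Fin n, lamA k.succ ≤ mu k ∧ mu k ≤ lamA k.castSucc := by
  obtain ⟨σ, hσ⟩ := henumA
  obtain ⟨τ, hτ⟩ := henumB
  have hJ := A.inner_extendByZeroIsometry_toEuclideanLin (Fin.castSucc_injective n)
  rw [← hBdef] at hJ
  have hv := hA.eigenvectorBasis.orthonormal.comp σ σ.injective
  have hTv (i) : A.toEuclideanLin (hA.eigenvectorBasis (σ i)) =
      (lamA i : ℂ) • hA.eigenvectorBasis (σ i) := by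
    rw [hσ]; exact hA.toEuclideanLin_eigenvectorBasis (σ i)
  have hw := hB.eigenvectorBasis.orthonormal.comp τ τ.injective
  have hSw (j) : B.toEuclideanLin (hB.eigenvectorBasis (τ j)) =
      (mu j : ℂ) • hB.eigenvectorBasis (τ j) := by
    rw [hτ]; exact hB.toEuclideanLin_eigenvectorBasis (τ j)
  intro k
  exact ⟨eigenvalue_le_compression_eigenvalue hJ finrank_euclideanSpace_fin hv hTv hlamA hw hSw
      hmu (by simp only [Fin.val_succ]; omega),
    compression_eigenvalue_le_eigenvalue hJ finrank_euclideanSpace_fin hv hTv hlamA hw hSw hmu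
      (by simp)⟩
end

section
/- Let A be an n×n Hermitian positive semidefinite complex matrix with eigenvalues λ₁ ≥ ... ≥ λₙ. Then for every k ≤ n, the sum λ₁ + ... + λₖ equals the maximum of Σ_{i=1}^{k} ⟨A vᵢ, vᵢ⟩ over all orthonormal families (v₁, ..., vₖ) in ℂⁿ. -/
/-!
Expand in an orthonormal eigenbasis `b` of `A`, with eigenvalues `λⱼ`: for any orthonormal
`v₁, …, vₖ`, `∑ᵢ ⟪A vᵢ, vᵢ⟫ = ∑ⱼ λⱼ cⱼ` where `cⱼ = ∑ᵢ |⟪bⱼ, vᵢ⟫|²`. Bessel's inequality gives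
`0 ≤ cⱼ ≤ 1` and Parseval's identity gives `∑ⱼ cⱼ = k`. Over such weights a linear form with
decreasing coefficients is largest when the weight sits on the first `k` indices (bathtub
principle): for a threshold `t` separating the top `k` values `λⱼ` from the others, every term
`(λⱼ - t) (cⱼ - 1[j < k])` is nonpositive. The first `k` eigenvectors attain the bound.
-/

open Finset RCLike
open scoped InnerProductSpace

section Bathtub

variable {ι : Type*} [Fintype ι]

lemma exists_threshold_of_forall_le {s : Finset ι} {f : ι → ℝ} (hf : ∀ i ∈ s, ∀ j ∉ s, f j ≤ f i) :
    ∃ t, (∀ i ∈ s, t ≤ f i) ∧ ∀ j ∉ s, f j ≤ t := by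
  by_cases hs : s.Nonempty
  · exact ⟨s.inf' hs f, fun i hi ↦ s.inf'_le f hi,
      fun j hj ↦ s.le_inf' hs f fun i hi ↦ hf i hi j hj⟩
  · exact ⟨⨆ j, f j, fun i hi ↦ absurd ⟨i, hi⟩ hs,
      fun j _ ↦ le_ciSup (Set.finite_range f).bddAbove j⟩

lemma sum_mul_le_sum_of_forall_le {s : Finset ι} {f c : ι → ℝ}
    (hf : ∀ i ∈ s, ∀ j ∉ s, f j ≤ f i) (hc₀ : ∀ i, 0 ≤ c i) (hc₁ : ∀ i, c i ≤ 1)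
    (hc : ∑ i, c i = #s) :
    ∑ i, f i * c i ≤ ∑ i ∈ s, f i := by
  classical
  obtain ⟨t, hts, htsc⟩ := exists_threshold_of_forall_le hf
  have hterm (i : ι) : (f i - t) * (c i - if i ∈ s then 1 else 0) ≤ 0 := by
    split_ifs with hi
    · exact mul_nonpos_of_nonneg_of_nonpos (sub_nonneg.2 (hts i hi)) (sub_nonpos.2 (hc₁ i))
    · simpa using mul_nonpos_of_nonpos_of_nonneg (sub_nonpos.2 (htsc i hi)) (hc₀ i)
  have hsplit : ∑ i, (f i - t) * (c i - if i ∈ s then 1 else 0) =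
      ∑ i, f i * c i - ∑ i ∈ s, f i := by
    simp only [sub_mul, mul_sub, mul_ite, mul_one, mul_zero, sum_sub_distrib, ← mul_sum, hc,
      sum_ite_mem, univ_inter, sum_const, nsmul_eq_mul]
    ring
  linarith [sum_nonpos fun i (_ : i ∈ univ) ↦ hterm i]

end Bathtub

section Diagonal

variable {𝕜 E ι κ : Type*} [RCLike 𝕜] [NormedAddCommGroup E] [InnerProductSpace 𝕜 E]
  [Fintype ι] [Fintype κ] {T : E →ₗ[𝕜] E} {b : OrthonormalBasis ι 𝕜 E} {f : ι → ℝ}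

lemma inner_basis_map_eq (hT : ∀ j, T (b j) = (f j : 𝕜) • b j) (j : ι) (x : E) :
    ⟪b j, T x⟫_𝕜 = f j * ⟪b j, x⟫_𝕜 := by
  have hTx : T x = ∑ i, (f i * ⟪b i, x⟫_𝕜 : 𝕜) • b i := by
    conv_lhs => rw [← b.sum_repr' x]
    simp only [map_sum, map_smul, hT, smul_smul, mul_comm]
  rw [hTx, b.orthonormal.inner_right_fintype]

lemma re_inner_map_self_eq_sum (hT : ∀ j, T (b j) = (f j : 𝕜) • b j) (x : E) :
    re ⟪T x, x⟫_𝕜 = ∑ j, f j * ‖⟪b j, x⟫_𝕜‖ ^ 2 := by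
  rw [← b.sum_inner_mul_inner (T x) x, map_sum]
  refine sum_congr rfl fun j _ ↦ ?_
  rw [← inner_conj_symm, inner_basis_map_eq hT, map_mul (starRingEnd 𝕜), conj_ofReal, mul_assoc,
    RCLike.conj_mul]
  norm_cast

lemma re_inner_map_basis_self (hT : ∀ j, T (b j) = (f j : 𝕜) • b j) (j : ι) :
    re ⟪T (b j), b j⟫_𝕜 = f j := by
  simp [hT, inner_smul_left, b.orthonormal.1 j]

/-- For orthonormal `v`, the squared norm of the orthogonal projection of `b j` onto `span v`. -/
noncomputable def projWeight (b : OrthonormalBasis ι 𝕜 E) (v : κ → E) (j : ι) : ℝ :=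
  ∑ i, ‖⟪b j, v i⟫_𝕜‖ ^ 2

lemma sum_re_inner_map_eq_sum_mul_projWeight (hT : ∀ j, T (b j) = (f j : 𝕜) • b j) (v : κ → E) :
    ∑ i, re ⟪T (v i), v i⟫_𝕜 = ∑ j, f j * projWeight b v j := by
  simp only [re_inner_map_self_eq_sum hT, projWeight, mul_sum]
  exact sum_comm

lemma projWeight_nonneg (v : κ → E) (j : ι) : 0 ≤ projWeight b v j :=
  sum_nonneg fun _ _ ↦ sq_nonneg _

lemma projWeight_le_one {v : κ → E} (hv : Orthonormal 𝕜 v) (j : ι) : projWeight b v j ≤ 1 := by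
  simpa [projWeight, norm_inner_symm, b.orthonormal.1 j] using
    hv.sum_inner_products_le (b j) (s := univ)

lemma sum_projWeight {v : κ → E} (hv : Orthonormal 𝕜 v) :
    ∑ j, projWeight b v j = Fintype.card κ := by
  simp [projWeight, sum_comm (γ := ι), b.sum_sq_norm_inner_right, hv.1]

end Diagonal

section KyFan

variable {𝕜 E : Type*} [RCLike 𝕜] [NormedAddCommGroup E] [InnerProductSpace 𝕜 E]
  {n k : ℕ} {T : E →ₗ[𝕜] E} {b : OrthonormalBasis (Fin n) 𝕜 E} {f : Fin n → ℝ}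

lemma sum_re_inner_map_le_sum_castLE (hT : ∀ j, T (b j) = (f j : 𝕜) • b j) (hf : Antitone f)
    (hk : k ≤ n) {v : Fin k → E} (hv : Orthonormal 𝕜 v) :
    ∑ i, re ⟪T (v i), v i⟫_𝕜 ≤ ∑ i : Fin k, f (Fin.castLE hk i) := by
  rw [sum_re_inner_map_eq_sum_mul_projWeight hT, ← Fin.coe_castLEEmb hk,
    ← sum_map univ (Fin.castLEEmb hk) f]
  refine sum_mul_le_sum_of_forall_le ?_ (projWeight_nonneg v) (projWeight_le_one hv) ?_
  · intro i hi j hj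
    refine hf (le_of_lt ?_)
    simp only [mem_map, mem_univ, true_and, ← Set.mem_range, Fin.coe_castLEEmb, Fin.range_castLE,
      Set.mem_ofPred_eq, not_lt] at hi hj
    exact Fin.lt_def.2 (lt_of_lt_of_le hi hj)
  · simp [sum_projWeight hv]

end KyFan

open scoped ComplexOrder
theorem stmt_5_general {n : ℕ} (A : Matrix (Fin n) (Fin n) ℂ) (hA : A.IsHermitian)
    (lam : Fin n → ℝ) (hlam : Antitone lam)
    (henum : ∃ σ : Equiv.Perm (Fin n), ∀ i, lam i = hA.eigenvalues (σ i))
    (k : ℕ) (hk : k ≤ n) :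
    IsGreatest {r : ℝ | ∃ v : Fin k → EuclideanSpace ℂ (Fin n), Orthonormal ℂ v ∧
        r = ∑ i : Fin k, Complex.re (inner ℂ ((Matrix.toEuclideanCLM (𝕜 := ℂ) A) (v i)) (v i))}
      (∑ i : Fin k, lam (Fin.castLE hk i)) := by
  obtain ⟨σ, hσ⟩ := henum
  set T : EuclideanSpace ℂ (Fin n) →ₗ[ℂ] EuclideanSpace ℂ (Fin n) :=
    ↑(Matrix.toEuclideanCLM (𝕜 := ℂ) A)
  set b := hA.eigenvectorBasis.reindex σ.symm
  have hTb (j : Fin n) : T (b j) = (lam j : ℂ) • b j := by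
    ext i
    simpa [T, b, hσ, Matrix.ofLp_toEuclideanCLM] using
      congrFun (hA.mulVec_eigenvectorBasis (σ j)) i
  refine ⟨⟨b ∘ Fin.castLE hk, b.orthonormal.comp _ (Fin.castLE_injective hk),
    sum_congr rfl fun i _ ↦ (re_inner_map_basis_self hTb _).symm⟩, ?_⟩
  rintro r ⟨v, hv, rfl⟩
  exact sum_re_inner_map_le_sum_castLE hTb hlam hk hv

theorem stmt_5 {n : ℕ} (A : Matrix (Fin n) (Fin n) ℂ) (hA : A.IsHermitian)
    (hpsd : A.PosSemidef)
    (lam : Fin n → ℝ) (hlam : Antitone lam)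
    (henum : ∃ σ : Equiv.Perm (Fin n), ∀ i, lam i = hA.eigenvalues (σ i))
    (k : ℕ) (hk : k ≤ n) :
    IsGreatest {r : ℝ | ∃ v : Fin k → EuclideanSpace ℂ (Fin n), Orthonormal ℂ v ∧
        r = ∑ i : Fin k, Complex.re (inner ℂ ((Matrix.toEuclideanCLM (𝕜 := ℂ) A) (v i)) (v i))}
      (∑ i : Fin k, lam (Fin.castLE hk i)) :=
  stmt_5_general A hA lam hlam henum k hk
end
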